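/- Every modular flat of a round matroid is round; that is, if M is a round matroid and X is a modular flat of M, then the restriction M|X is round. -/

import Mathlib

/-!
Extend a basis of the modular flat `X` to a basis of `M`; the added elements form a set `J` with
`cl (X ∪ J) = E` and `r X + r J = r E`. For every flat `Y ⊇ J` modularity then reads
`r (X ∩ Y) = r Y - r J`. With `Y = cl (F ∪ J)` this gives `X ∩ cl (F ∪ J) = F` for each flat
`F ⊆ X`, so proper flats of `M ↾ X` yield proper flats of `M`. With `Y = cl (J + e)` for
`e ∉ cl J` it gives some `x ∈ X ∩ Y` outside `cl J`, and exchange puts `e` in `cl (J + x)`.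
Hence a cover `X = F₁ ∪ F₂` by proper flats lifts to the cover
`E = cl (F₁ ∪ J) ∪ cl (F₂ ∪ J)` by proper flats.
-/

open scoped Classical Matroid

namespace Paper

variable {α : Type*}

/-- The rank of a set in a matroid: the maximum size of an independent subset. -/
noncomputable def mrk (M : Matroid α) (X : Set α) : ℕ :=
  sSup {n | ∃ I, M.Indep I ∧ I ⊆ X ∧ I.ncard = n}

/-- A circuit of a matroid: a minimal dependent subset of the ground set. -/
def Circuit (M : Matroid α) (C : Set α) : Prop :=
  C ⊆ M.E ∧ ¬ M.Indep C ∧ ∀ D ⊂ C, M.Indep D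

/-- A matroid is simple if every subset of the ground set with at most two
elements is independent. -/
def SimpleM (M : Matroid α) : Prop :=
  ∀ X ⊆ M.E, X.ncard ≤ 2 → M.Indep X

/-- A modular flat: a flat `X` with `r X + r Y = r (X ⊓ Y) + r (X ⊔ Y)` for every flat `Y`
(meet of flats is intersection; join is the closure of the union). -/
def ModularFlat (M : Matroid α) (X : Set α) : Prop :=
  M.IsFlat X ∧ ∀ Y, M.IsFlat Y →
    mrk M X + mrk M Y = mrk M (X ∩ Y) + mrk M (M.closure (X ∪ Y))

/-- A matroid is round if its ground set is not the union of two proper flats. -/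
def Round (M : Matroid α) : Prop :=
  ¬ ∃ F₁ F₂ : Set α, M.IsFlat F₁ ∧ M.IsFlat F₂ ∧ F₁ ≠ M.E ∧ F₂ ≠ M.E ∧ M.E = F₁ ∪ F₂

open Set Matroid

variable {M : Matroid α} {X Y F F' I J : Set α} {e : α}

lemma cast_mrk_of_isRkFinite (hX : M.IsRkFinite X) : (mrk M X : ℕ∞) = M.eRk X := by
  obtain ⟨I, hI, hIfin⟩ := hX.exists_finite_isBasis'
  have hmax : IsGreatest {n | ∃ J, M.Indep J ∧ J ⊆ X ∧ J.ncard = n} I.ncard := by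
    refine ⟨⟨I, hI.indep, hI.subset, rfl⟩, ?_⟩
    rintro _ ⟨J, hJ, hJX, rfl⟩
    have hJfin : J.Finite := hX.finite_of_indep_subset hJ hJX
    rw [← ENat.natCast_le_natCast, hJfin.cast_ncard_eq, hIfin.cast_ncard_eq, hI.encard_eq_eRk]
    exact hJ.encard_le_eRk_of_subset hJX
  rw [mrk, hmax.csSup_eq, hIfin.cast_ncard_eq, hI.encard_eq_eRk]

section RankFinite

variable [M.RankFinite]

lemma cast_mrk (M : Matroid α) [M.RankFinite] (X : Set α) : (mrk M X : ℕ∞) = M.eRk X :=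
  cast_mrk_of_isRkFinite (M.isRkFinite_set X)

lemma mrk_mono (h : X ⊆ Y) : mrk M X ≤ mrk M Y := by
  rw [← ENat.natCast_le_natCast, cast_mrk, cast_mrk]
  exact M.eRk_mono h

lemma mrk_closure (M : Matroid α) [M.RankFinite] (X : Set α) : mrk M (M.closure X) = mrk M X := by
  rw [← ENat.natCast_inj, cast_mrk, cast_mrk, eRk_closure_eq]

lemma mrk_eq_ncard_of_isBasis (hI : M.IsBasis I X) : mrk M X = I.ncard := by
  rw [← ENat.natCast_inj, cast_mrk, ← hI.encard_eq_eRk, hI.indep.finite.cast_ncard_eq]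

lemma mrk_eq_ncard_of_indep (hI : M.Indep I) : mrk M I = I.ncard :=
  mrk_eq_ncard_of_isBasis hI.isBasis_self

lemma mrk_union_le (M : Matroid α) [M.RankFinite] (X Y : Set α) :
    mrk M (X ∪ Y) ≤ mrk M X + mrk M Y := by
  rw [← ENat.natCast_le_natCast, Nat.cast_add, cast_mrk, cast_mrk, cast_mrk]
  exact M.eRk_union_le_eRk_add_eRk X Y

lemma mrk_insert_of_notMem_closure (he : e ∈ M.E \ M.closure X) :
    mrk M (insert e X) = mrk M X + 1 := by
  rw [← ENat.natCast_inj, Nat.cast_add, cast_mrk, cast_mrk, Nat.cast_one, eRk_insert_eq_add_one he]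

lemma _root_.Matroid.IsFlat.eq_of_subset_of_mrk_le (hF : M.IsFlat F) (hF' : M.IsFlat F')
    (hFF' : F ⊆ F') (hr : mrk M F' ≤ mrk M F) : F = F' := by
  rw [← hF.closure, ← hF'.closure]
  refine (M.isRkFinite_set F).closure_eq_closure_of_subset_of_eRk_ge_eRk hFF' ?_
  rwa [← cast_mrk, ← cast_mrk, ENat.natCast_le_natCast]

end RankFinite

lemma _root_.Matroid.IsFlat.inter (hF : M.IsFlat F) (hF' : M.IsFlat F') : M.IsFlat (F ∩ F') := by
  rw [inter_eq_iInter]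
  exact IsFlat.iInter fun b ↦ by cases b <;> assumption

lemma _root_.Matroid.IsFlat.isFlat_of_restrict (hX : M.IsFlat X) (hF : (M ↾ X).IsFlat F) :
    M.IsFlat F := by
  have hFX : F ⊆ X := hF.subset_ground
  rw [← hF.closure, restrict_closure_eq _ hFX hX.subset_ground]
  exact (M.isFlat_closure F).inter hX

structure IsComplement (M : Matroid α) (X J : Set α) : Prop where
  subset_ground : J ⊆ M.E
  closure_union_eq : M.closure (X ∪ J) = M.E
  mrk_add_mrk : mrk M X + mrk M J = mrk M M.E

lemma exists_isComplement [M.RankFinite] (hX : X ⊆ M.E) : ∃ J, IsComplement M X J := by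
  obtain ⟨I, hI⟩ := M.exists_isBasis X
  obtain ⟨B, hB, hIB⟩ := hI.indep.exists_isBase_superset
  refine ⟨B \ I, sdiff_subset.trans hB.subset_ground, hB.closure_of_superset fun b hb ↦ ?_, ?_⟩
  · by_cases hbI : b ∈ I
    exacts [.inl (hI.subset hbI), .inr ⟨hb, hbI⟩]
  · rw [mrk_eq_ncard_of_isBasis hI, mrk_eq_ncard_of_indep (hB.indep.subset sdiff_subset),
      mrk_eq_ncard_of_isBasis hB.isBasis_ground, add_comm,
      ncard_sdiff_add_ncard_of_subset hIB hB.indep.finite]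

namespace ModularFlat

lemma mrk_inter_add_mrk (hX : ModularFlat M X) (hJ : IsComplement M X J) (hY : M.IsFlat Y)
    (hJY : J ⊆ Y) : mrk M (X ∩ Y) + mrk M J = mrk M Y := by
  have hXY : M.closure (X ∪ Y) = M.E :=
    (M.closure_subset_ground _).antisymm
      (hJ.closure_union_eq ▸ M.closure_subset_closure (union_subset_union_right X hJY))
  have hmod := hX.2 Y hY
  rw [hXY] at hmod
  have := hJ.mrk_add_mrk
  omega

variable [M.RankFinite]

lemma inter_closure_union_eq (hX : ModularFlat M X) (hJ : IsComplement M X J)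
    (hF : M.IsFlat F) (hFX : F ⊆ X) : X ∩ M.closure (F ∪ J) = F := by
  have hFJ : F ∪ J ⊆ M.E := union_subset (hFX.trans hX.1.subset_ground) hJ.subset_ground
  have hr := hX.mrk_inter_add_mrk hJ (M.isFlat_closure _)
    (subset_union_right.trans (M.subset_closure _ hFJ))
  have := mrk_union_le M F J
  rw [mrk_closure] at hr
  exact (hF.eq_of_subset_of_mrk_le (hX.1.inter (M.isFlat_closure _))
    (subset_inter hFX (subset_union_left.trans (M.subset_closure _ hFJ))) (by omega)).symm

lemma closure_union_ne_ground (hX : ModularFlat M X) (hJ : IsComplement M X J)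
    (hF : M.IsFlat F) (hFX : F ⊆ X) (hne : F ≠ X) : M.closure (F ∪ J) ≠ M.E := by
  intro hE
  have := hX.inter_closure_union_eq hJ hF hFX
  rw [hE, inter_eq_self_of_subset_left hX.1.subset_ground] at this
  exact hne this.symm

lemma exists_mem_mem_closure_insert (hX : ModularFlat M X) (hJ : IsComplement M X J)
    (he : e ∈ M.E \ M.closure J) : ∃ x ∈ X, e ∈ M.closure (insert x J) := by
  have h1 := hX.mrk_inter_add_mrk hJ (M.isFlat_closure (insert e J))
    ((subset_insert e J).trans (M.subset_closure _ (insert_subset he.1 hJ.subset_ground)))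
  have h0 := hX.mrk_inter_add_mrk hJ (M.isFlat_closure J) (M.subset_closure J hJ.subset_ground)
  rw [mrk_closure, mrk_insert_of_notMem_closure he] at h1
  rw [mrk_closure] at h0
  obtain ⟨x, ⟨hxX, hxZ⟩, hxJ⟩ : ∃ x ∈ X ∩ M.closure (insert e J), x ∉ M.closure J := by
    by_contra! h
    have := mrk_mono (M := M) (subset_inter inter_subset_left h)
    omega
  exact ⟨x, hxX, (M.closure_exchange ⟨hxZ, hxJ⟩).1⟩

lemma ground_eq_union_closure (hX : ModularFlat M X) (hJ : IsComplement M X J)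
    {F₁ F₂ : Set α} (hF : X = F₁ ∪ F₂) : M.E = M.closure (F₁ ∪ J) ∪ M.closure (F₂ ∪ J) := by
  refine subset_antisymm (fun e he ↦ ?_)
    (union_subset (M.closure_subset_ground _) (M.closure_subset_ground _))
  by_cases heJ : e ∈ M.closure J
  · exact .inl (M.closure_subset_closure subset_union_right heJ)
  obtain ⟨x, hxX, hex⟩ := hX.exists_mem_mem_closure_insert hJ ⟨he, heJ⟩
  rcases hF ▸ hxX with hx | hx
  · exact .inl (M.closure_subset_closure (insert_subset (.inl hx) subset_union_right) hex)
  · exact .inr (M.closure_subset_closure (insert_subset (.inl hx) subset_union_right) hex)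

end ModularFlat

/-- Every modular flat of a round matroid is round. -/
theorem stmt3 (M : Matroid α) (hfin : M.E.Finite) (hround : Round M)
    {X : Set α} (hX : ModularFlat M X) :
    Round (M ↾ X) := by
  rintro ⟨F₁, F₂, hF₁, hF₂, hF₁X, hF₂X, hX₁₂⟩
  have : M.Finite := ⟨hfin⟩
  obtain ⟨J, hJ⟩ := exists_isComplement hX.1.subset_ground
  exact hround ⟨_, _, M.isFlat_closure _, M.isFlat_closure _,
    hX.closure_union_ne_ground hJ (hX.1.isFlat_of_restrict hF₁) hF₁.subset_ground hF₁X,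
    hX.closure_union_ne_ground hJ (hX.1.isFlat_of_restrict hF₂) hF₂.subset_ground hF₂X,
    hX.ground_eq_union_closure hJ hX₁₂⟩

end Paper
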